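/- arXiv:1601.01008 — 2 statements merged into one kernel-verified Lean document; each statement's English description precedes it below -/
import Mathlib

section
/- Let G be the simple graph on ℤ × ℤ in which two points u and v are adjacent if and only if u - v ∈ {(1,0), (-1,0), (0,1), (0,-1), (1,-1), (-1,1)}. For every integer i ≥ 1, the subgraph of G induced on the set of vertices at graph distance exactly i from the origin (0,0) is isomorphic to the cycle graph on 6i vertices. -/
/-- The infinite regular triangular grid graph on `ℤ × ℤ`: two points `u, v` are adjacent
iff `u - v ∈ {(1,0), (-1,0), (0,1), (0,-1), (1,-1), (-1,1)}`. -/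
def triGrid : SimpleGraph (ℤ × ℤ) where
  Adj u v := u - v ∈
    ({(1, 0), (-1, 0), (0, 1), (0, -1), (1, -1), (-1, 1)} : Set (ℤ × ℤ))
  symm := by
    constructor
    intro u v h
    rw [show v - u = -(u - v) from (neg_sub u v).symm]
    simp only [Set.mem_insert_iff, Set.mem_singleton_iff] at h ⊢
    rcases h with h | h | h | h | h | h <;> rw [h] <;> simp [Prod.ext_iff]
  loopless := by
    constructor
    intro u h
    simp only [sub_self, Set.mem_insert_iff, Set.mem_singleton_iff, Prod.ext_iff] at h
    simp_all


/-!
In these axial coordinates the graph distance from the origin is the hexagonal norm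
`max |x| (max |y| |x + y|)`: it grows by at most one along an edge, and every vertex other
than the origin has a neighbour one step closer. The sphere of radius `i` is therefore the
boundary of the hexagon with corners `(i, 0), (0, i), (-i, i), (-i, 0), (0, -i), (i, -i)`,
and walking along its six sides lists its `6 i` vertices so that exactly the cyclically
consecutive ones are adjacent.
-/

namespace SimpleGraph

variable {V : Type*} {G : SimpleGraph V} {f : V → ℕ}

theorem le_add_length_of_adj_le_add_one (hf : ∀ u v, G.Adj u v → f v ≤ f u + 1)
    {u v : V} (w : G.Walk u v) : f v ≤ f u + w.length := by
  induction w with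
  | nil => simp
  | cons h _ ih =>
    have := hf _ _ h
    rw [Walk.length_cons]
    omega

theorem exists_walk_length_eq_of_exists_adj_add_one_eq {r : V} (hr : f r = 0)
    (hf : ∀ v, v ≠ r → ∃ u, G.Adj u v ∧ f u + 1 = f v) (v : V) :
    ∃ w : G.Walk r v, w.length = f v := by
  induction h : f v using Nat.strong_induction_on generalizing v with
  | _ n ih =>
    by_cases hv : v = r
    · subst hv
      exact ⟨.nil, by simp [hr, ← h]⟩
    obtain ⟨u, huv, hu⟩ := hf v hv
    obtain ⟨w, hw⟩ := ih (f u) (by omega) u rfl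
    exact ⟨w.concat huv, by simp [hw, hu, h]⟩

theorem dist_eq_of_adj_le_add_one_of_exists_adj {r : V} (hr : f r = 0)
    (hle : ∀ u v, G.Adj u v → f v ≤ f u + 1)
    (hpred : ∀ v, v ≠ r → ∃ u, G.Adj u v ∧ f u + 1 = f v) (v : V) :
    G.dist r v = f v := by
  obtain ⟨w, hw⟩ := exists_walk_length_eq_of_exists_adj_add_one_eq hr hpred v
  refine le_antisymm (hw ▸ dist_le w) ?_
  obtain ⟨w', hw'⟩ := Reachable.exists_walk_length_eq_dist ⟨w⟩
  have := le_add_length_of_adj_le_add_one hle w'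
  omega

theorem nonempty_induce_iso_of_injective {W : Type*} {H : SimpleGraph W} {s : Set V}
    {g : W → V} (hinj : Function.Injective g) (hrange : Set.range g = s)
    (hadj : ∀ a b, G.Adj (g a) (g b) ↔ H.Adj a b) : Nonempty (G.induce s ≃g H) := by
  subst hrange
  exact ⟨(⟨Equiv.ofInjective g hinj, by simp [hadj]⟩ : H ≃g G.induce (Set.range g)).symm⟩

theorem cycleGraph_adj_iff_val {n : ℕ} (hn : 2 ≤ n) {a b : Fin n} :
    (cycleGraph n).Adj a b ↔ a.val + 1 = b.val ∨ b.val + 1 = a.val ∨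
      (a.val + 1 = n ∧ b.val = 0) ∨ (b.val + 1 = n ∧ a.val = 0) := by
  obtain ⟨m, rfl⟩ : ∃ m, n = m + 2 := ⟨n - 2, by omega⟩
  rw [cycleGraph_adj, sub_eq_iff_eq_add', sub_eq_iff_eq_add', Fin.ext_iff, Fin.ext_iff,
    Fin.val_add_one, Fin.val_add_one]
  have ha := a.isLt
  have hb := b.isLt
  split_ifs with hb_last ha_last ha_last <;>
    simp only [Fin.ext_iff, Fin.val_last] at hb_last ha_last <;> omega

end SimpleGraph

theorem triGrid_adj_iff {u v : ℤ × ℤ} : triGrid.Adj u v ↔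
    (u.1 - v.1 = 1 ∧ u.2 - v.2 = 0) ∨ (u.1 - v.1 = -1 ∧ u.2 - v.2 = 0) ∨
    (u.1 - v.1 = 0 ∧ u.2 - v.2 = 1) ∨ (u.1 - v.1 = 0 ∧ u.2 - v.2 = -1) ∨
    (u.1 - v.1 = 1 ∧ u.2 - v.2 = -1) ∨ (u.1 - v.1 = -1 ∧ u.2 - v.2 = 1) := by
  change u - v ∈ _ ↔ _
  simp [Prod.ext_iff]

def hexNorm (v : ℤ × ℤ) : ℕ := max v.1.natAbs (max v.2.natAbs (v.1 + v.2).natAbs)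

theorem hexNorm_le_of_adj {u v : ℤ × ℤ} (h : triGrid.Adj u v) :
    hexNorm v ≤ hexNorm u + 1 := by
  rw [triGrid_adj_iff] at h
  unfold hexNorm
  omega

theorem exists_adj_hexNorm_add_one_eq {v : ℤ × ℤ} (hv : v ≠ (0, 0)) :
    ∃ u, triGrid.Adj u v ∧ hexNorm u + 1 = hexNorm v := by
  obtain ⟨x, y⟩ := v
  have hxy : ¬(x = 0 ∧ y = 0) := by simpa [Prod.ext_iff] using hv
  simp only [triGrid_adj_iff, hexNorm]
  by_cases h₁ : 0 < x ∧ y < 0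
  · exact ⟨(x - 1, y + 1), by omega⟩
  by_cases h₂ : x < 0 ∧ 0 < y
  · exact ⟨(x + 1, y - 1), by omega⟩
  by_cases h₃ : 0 < x
  · exact ⟨(x - 1, y), by omega⟩
  by_cases h₄ : x < 0
  · exact ⟨(x + 1, y), by omega⟩
  by_cases h₅ : 0 < y
  · exact ⟨(x, y - 1), by omega⟩
  · exact ⟨(x, y + 1), by omega⟩

theorem triGrid_dist_eq_hexNorm (v : ℤ × ℤ) : triGrid.dist (0, 0) v = hexNorm v :=
  SimpleGraph.dist_eq_of_adj_le_add_one_of_exists_adj (f := hexNorm) rfl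
    (fun _ _ ↦ hexNorm_le_of_adj) (fun _ ↦ exists_adj_hexNorm_add_one_eq) v

/-- The `k`-th vertex of the hexagon of radius `i`, counterclockwise from `(i, 0)`;
the corners are at `k = 0, i, 2i, …, 5i`. -/
def hexagonVertex (i k : ℕ) : ℤ × ℤ :=
  if k < i then (i - k, k)
  else if k < 2 * i then (i - k, i)
  else if k < 3 * i then (-i, 3 * i - k)
  else if k < 4 * i then (k - 4 * i, 3 * i - k)
  else if k < 5 * i then (k - 4 * i, -i)
  else (i, k - 6 * i)

theorem hexNorm_hexagonVertex {i k : ℕ} (hk : k < 6 * i) :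
    hexNorm (hexagonVertex i k) = i := by
  unfold hexagonVertex hexNorm
  split_ifs <;> omega

theorem hexagonVertex_injOn (i : ℕ) : Set.InjOn (hexagonVertex i) (Set.Iio (6 * i)) := by
  intro a ha b hb h
  simp only [Set.mem_Iio] at ha hb
  unfold hexagonVertex at h
  split_ifs at h <;> simp only [Prod.ext_iff] at h <;> omega

theorem exists_hexagonVertex_eq {i : ℕ} (hi : 1 ≤ i) {v : ℤ × ℤ} (hv : hexNorm v = i) :
    ∃ k < 6 * i, hexagonVertex i k = v := by
  obtain ⟨x, y⟩ := v
  unfold hexNorm at hv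
  -- the position of `(x, y)`, read off on whichever side of the hexagon it lies
  obtain ⟨k, hk⟩ : ∃ k : ℤ, k =
      if 0 < x ∧ 0 ≤ y then y else if x ≤ 0 ∧ 0 < x + y then i - x
      else if 0 < y then 3 * i - y else if x < 0 ∨ x + y < 0 then x + 4 * i else y + 6 * i :=
    ⟨_, rfl⟩
  split_ifs at hk <;> refine ⟨k.toNat, by omega, ?_⟩ <;> unfold hexagonVertex <;> split_ifs <;>
    simp only [Prod.ext_iff] <;> omega

theorem triGrid_adj_hexagonVertex_iff {i a b : ℕ} (ha : a < 6 * i) (hb : b < 6 * i) :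
    triGrid.Adj (hexagonVertex i a) (hexagonVertex i b) ↔
      a + 1 = b ∨ b + 1 = a ∨ (a + 1 = 6 * i ∧ b = 0) ∨ (b + 1 = 6 * i ∧ a = 0) := by
  rw [triGrid_adj_iff]
  unfold hexagonVertex
  split_ifs <;> omega

/-- For every integer `i ≥ 1`, the subgraph of the triangular grid
graph induced on the set of vertices at graph distance exactly `i` from the origin is
isomorphic to the cycle graph on `6i` vertices. -/
theorem triGrid_sphere_isCycle (i : ℕ) (hi : 1 ≤ i) :
    Nonempty
      ((triGrid.induce {v : ℤ × ℤ | triGrid.dist (0, 0) v = i}) ≃g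
        SimpleGraph.cycleGraph (6 * i)) := by
  refine SimpleGraph.nonempty_induce_iso_of_injective
    (g := fun k : Fin (6 * i) ↦ hexagonVertex i k) ?_ ?_ fun a b ↦ ?_
  · exact fun a b h ↦ Fin.ext (hexagonVertex_injOn i a.isLt b.isLt h)
  · ext v
    simp only [Set.mem_ofPred_eq, triGrid_dist_eq_hexNorm]
    refine ⟨?_, fun hv ↦ ?_⟩
    · rintro ⟨k, rfl⟩
      exact hexNorm_hexagonVertex k.isLt
    · obtain ⟨k, hk, rfl⟩ := exists_hexagonVertex_eq hi hv
      exact ⟨⟨k, hk⟩, rfl⟩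
  · rw [triGrid_adj_hexagonVertex_iff a.isLt b.isLt,
      SimpleGraph.cycleGraph_adj_iff_val (by omega)]
end

section
/- Let α be a finite type and let f : α → Option α be a partial function. Let G be the simple graph on α in which distinct vertices a and b are adjacent if and only if f a = some b or f b = some a. Then any two cycles of G whose base vertices lie in the same connected component of G have the same edge set; that is, each connected component of G contains at most one cycle. -/
/-- The simple graph on `α` associated with a partial function `f : α → Option α`:
distinct vertices `a` and `b` are adjacent iff `f a = some b` or `f b = some a`. -/
def partialFunGraph {α : Type*} (f : α → Option α) : SimpleGraph α where
  Adj a b := a ≠ b ∧ (f a = some b ∨ f b = some a)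
  symm := by
    constructor
    intro a b ⟨hne, hor⟩
    exact ⟨hne.symm, hor.symm⟩
  loopless := by
    constructor
    intro a h
    exact h.1 rfl

/-!
Every edge of `partialFunGraph f` has the form `s(x, y)` with `f x = some y`. A cycle has as many
edges as vertices, so every vertex `x` of a cycle has its edge `s(x, f x)` on the cycle: the
vertex set of the cycle is `f`-closed and the edges of the cycle are exactly these `s(x, f x)`.
Each vertex of a cycle has two cycle edges, so it also has an `f`-preimage on the cycle, and `f`
permutes the vertices of the cycle. Consequently every `f`-closed set meeting the cycle contains
all of it. Following `f` from the base of one cycle leads into the other cycle, so two cycles in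
one component meet; both being `f`-closed, they have the same vertices, hence the same edges.
-/

namespace SimpleGraph.Walk

variable {V : Type*} {G : SimpleGraph V}

lemma mem_of_mem_support_of_edges_closed {T : Set V} :
    ∀ {u v : V} (p : G.Walk u v), (∀ a b, s(a, b) ∈ p.edges → a ∈ T → b ∈ T) →
      ∀ {z}, z ∈ p.support → z ∈ T → ∀ x ∈ p.support, x ∈ T
  | _, _, nil, _, _, hz, hzT, _, hx => by simp_all
  | _, _, cons _ q, hT, _, hz, hzT, x, hx => by
    have hq : ∀ a b, s(a, b) ∈ q.edges → a ∈ T → b ∈ T :=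
      fun a b hab => hT a b (List.mem_cons_of_mem _ hab)
    have hqT : ∀ y ∈ q.support, y ∈ T := by
      rcases List.mem_cons.1 hz with rfl | hz
      · exact mem_of_mem_support_of_edges_closed q hq q.start_mem_support
          (hT _ _ (by simp) hzT)
      · exact mem_of_mem_support_of_edges_closed q hq hz hzT
    rcases List.mem_cons.1 hx with rfl | hx
    · exact hT _ _ (by simp [Sym2.eq_swap]) (hqT _ q.start_mem_support)
    · exact hqT x hx

lemma IsCycle.card_support_toFinset [DecidableEq V] {u : V} {c : G.Walk u u} (hc : c.IsCycle) :
    c.support.toFinset.card = c.length := by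
  rw [← c.cons_tail_support, List.toFinset_cons,
    Finset.insert_eq_of_mem (List.mem_toFinset.2 (c.end_mem_tail_support hc.not_nil)),
    List.toFinset_card_of_nodup hc.support_nodup, List.length_tail, length_support,
    Nat.add_sub_cancel]

lemma IsCycle.exists_ne_mem_edges {u v : V} {c : G.Walk u u} (hc : c.IsCycle)
    (hv : v ∈ c.support) : ∃ w w', w ≠ w' ∧ s(v, w) ∈ c.edges ∧ s(v, w') ∈ c.edges := by
  obtain ⟨w, w', hne, hN⟩ := Set.ncard_eq_two.1 (hc.ncard_neighborSet_toSubgraph_eq_two hv)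
  have hw : w ∈ c.toSubgraph.neighborSet v := hN ▸ Set.mem_insert _ _
  have hw' : w' ∈ c.toSubgraph.neighborSet v := hN ▸ Set.mem_insert_of_mem _ rfl
  exact ⟨w, w', hne, adj_toSubgraph_iff_mem_edges.1 hw, adj_toSubgraph_iff_mem_edges.1 hw'⟩

end SimpleGraph.Walk

namespace partialFunGraph

open SimpleGraph

variable {α : Type*} {f : α → Option α}

def IsForwardClosed (f : α → Option α) (T : Set α) : Prop :=
  ∀ x ∈ T, ∀ y ∈ f x, y ∈ T

lemma IsForwardClosed.mem_of_reflTransGen {T : Set α} (hT : IsForwardClosed f T) {x y : α}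
    (hx : x ∈ T) (hxy : Relation.ReflTransGen (fun a b => b ∈ f a) x y) : y ∈ T := by
  induction hxy with
  | refl => exact hx
  | tail _ hbc ih => exact hT _ ih _ hbc

lemma exists_eq_mk_of_mem_edges {u v : α} {p : (partialFunGraph f).Walk u v} {e : Sym2 α}
    (he : e ∈ p.edges) : ∃ x ∈ p.support, ∃ y ∈ f x, e = s(x, y) := by
  induction e using Sym2.ind with
  | _ a b =>
    rcases (p.adj_of_mem_edges he).2 with h | h
    · exact ⟨a, p.fst_mem_support_of_mem_edges he, b, h, rfl⟩
    · exact ⟨b, p.snd_mem_support_of_mem_edges he, a, h, Sym2.eq_swap⟩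

/-- The vertices whose forward orbit meets `T` form a set closed under adjacency, since an edge
`s(a, b)` with `f a = some b` makes `b` the next vertex of the orbit of `a`. -/
lemma exists_reflTransGen_mem_of_reachable {T : Set α} (hT : IsForwardClosed f T)
    {v w : α} (hv : v ∈ T) (hvw : (partialFunGraph f).Reachable v w) :
    ∃ z ∈ T, Relation.ReflTransGen (fun a b => b ∈ f a) w z := by
  obtain ⟨p⟩ := hvw
  refine p.mem_of_mem_support_of_edges_closed
    (T := {x | ∃ z ∈ T, Relation.ReflTransGen (fun a b => b ∈ f a) x z})
    (fun a b hab => ?_) p.start_mem_support ⟨v, hv, .refl⟩ w p.end_mem_support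
  rintro ⟨z, hz, haz⟩
  rcases (p.adj_of_mem_edges hab).2 with h | h
  · rcases haz.cases_head with rfl | ⟨b', hb', hb'z⟩
    · exact ⟨b, hT _ hz _ h, .refl⟩
    · cases Option.mem_unique h hb'
      exact ⟨z, hz, hb'z⟩
  · exact ⟨z, hz, .head h haz⟩

variable {u : α} {c : (partialFunGraph f).Walk u u}

lemma exists_mem_edges_of_isCycle (hc : c.IsCycle) {x : α} (hx : x ∈ c.support) :
    ∃ y ∈ f x, s(x, y) ∈ c.edges := by
  classical
  let X := c.support.toFinset.filter fun x => ∃ y ∈ f x, s(x, y) ∈ c.edges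
  have hE : c.edges.toFinset ⊆ X.image fun x => s(x, (f x).getD x) := by
    intro e he
    rw [List.mem_toFinset] at he
    obtain ⟨a, ha, b, hb, rfl⟩ := exists_eq_mk_of_mem_edges he
    refine Finset.mem_image.2 ⟨a, Finset.mem_filter.2 ⟨List.mem_toFinset.2 ha, b, hb, he⟩, ?_⟩
    rw [Option.mem_def.1 hb, Option.getD_some]
  have hcard : X.card = c.support.toFinset.card := by
    refine le_antisymm (Finset.card_filter_le _ _) ?_
    calc c.support.toFinset.card = c.edges.toFinset.card := by
          rw [hc.card_support_toFinset, List.toFinset_card_of_nodup hc.edges_nodup,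
            Walk.length_edges]
      _ ≤ _ := Finset.card_le_card hE
      _ ≤ X.card := Finset.card_image_le
  exact Finset.card_filter_eq_iff.1 hcard x (List.mem_toFinset.2 hx)

lemma isForwardClosed_support_of_isCycle (hc : c.IsCycle) :
    IsForwardClosed f {x | x ∈ c.support} := by
  intro x hx y hy
  obtain ⟨y', hy', he⟩ := exists_mem_edges_of_isCycle hc hx
  cases Option.mem_unique hy hy'
  exact c.snd_mem_support_of_mem_edges he

lemma mem_edges_iff_of_isCycle (hc : c.IsCycle) {e : Sym2 α} :
    e ∈ c.edges ↔ ∃ x ∈ c.support, ∃ y ∈ f x, e = s(x, y) := by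
  refine ⟨exists_eq_mk_of_mem_edges, ?_⟩
  rintro ⟨x, hx, y, hy, rfl⟩
  obtain ⟨y', hy', he⟩ := exists_mem_edges_of_isCycle hc hx
  rwa [Option.mem_unique hy hy']

lemma exists_mem_support_mem_of_isCycle (hc : c.IsCycle) {x : α} (hx : x ∈ c.support) :
    ∃ w ∈ c.support, x ∈ f w := by
  by_contra! hnone
  obtain ⟨w, w', hne, hw, hw'⟩ := hc.exists_ne_mem_edges hx
  have hout : ∀ {y}, s(x, y) ∈ c.edges → f x = some y := fun hy =>
    (c.adj_of_mem_edges hy).2.resolve_right (hnone _ (c.snd_mem_support_of_mem_edges hy))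
  exact hne (Option.some_injective _ ((hout hw).symm.trans (hout hw')))

lemma injOn_support_of_isCycle (hc : c.IsCycle) : Set.InjOn f {x | x ∈ c.support} := by
  classical
  rw [← List.coe_toFinset]
  refine Finset.injOn_of_surjOn_of_card_le f (t := c.support.toFinset.image some)
    (fun x hx => ?_) (fun y hy => ?_)
    (Finset.card_image_of_injective _ (Option.some_injective α)).ge
  · obtain ⟨y, hy, -⟩ := exists_mem_edges_of_isCycle hc (List.mem_toFinset.1 hx)
    exact Finset.mem_image.2 ⟨y, List.mem_toFinset.2
      (isForwardClosed_support_of_isCycle hc _ (List.mem_toFinset.1 hx) _ hy), hy.symm⟩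
  · obtain ⟨x, hx, rfl⟩ := Finset.mem_image.1 hy
    obtain ⟨w, hw, hxw⟩ := exists_mem_support_mem_of_isCycle hc (List.mem_toFinset.1 hx)
    exact ⟨w, List.mem_toFinset.2 hw, hxw⟩

/-- Being injective, `f` maps the vertices of `c` lying in `T` onto themselves, so an
`f`-preimage on `c` of a vertex in `T` lies in `T`: thus `T` is closed under the edges of `c`. -/
lemma forall_mem_support_mem_of_isCycle (hc : c.IsCycle) {T : Set α} (hT : IsForwardClosed f T)
    {z : α} (hz : z ∈ c.support) (hzT : z ∈ T) : ∀ x ∈ c.support, x ∈ T := by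
  classical
  let R := c.support.toFinset.filter (· ∈ T)
  have hR : ∀ {x}, x ∈ R ↔ x ∈ c.support ∧ x ∈ T := by simp [R]
  have hsurj : Set.SurjOn f R (R.image some) := by
    refine Finset.surjOn_of_injOn_of_card_le f (fun x hx => ?_)
      ((injOn_support_of_isCycle hc).mono fun x hx => (hR.1 hx).1) Finset.card_image_le
    obtain ⟨hxS, hxT⟩ := hR.1 hx
    obtain ⟨y, hy, -⟩ := exists_mem_edges_of_isCycle hc hxS
    exact Finset.mem_image.2
      ⟨y, hR.2 ⟨isForwardClosed_support_of_isCycle hc _ hxS _ hy, hT _ hxT _ hy⟩, hy.symm⟩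
  refine c.mem_of_mem_support_of_edges_closed (fun a b hab ha => ?_) hz hzT
  rcases (c.adj_of_mem_edges hab).2 with h | h
  · exact hT a ha b h
  · obtain ⟨t, ht, hta⟩ := hsurj
      (Finset.mem_image.2 ⟨a, hR.2 ⟨c.fst_mem_support_of_mem_edges hab, ha⟩, rfl⟩)
    obtain ⟨htS, htT⟩ := hR.1 ht
    rwa [injOn_support_of_isCycle hc (c.snd_mem_support_of_mem_edges hab) htS
      (h.trans hta.symm)]

end partialFunGraph

theorem partialFunGraph_unique_cycle_general {α : Type*} (f : α → Option α)
    {u v : α} (c : (partialFunGraph f).Walk u u) (c' : (partialFunGraph f).Walk v v)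
    (hc : c.IsCycle) (hc' : c'.IsCycle)
    (huv : (partialFunGraph f).Reachable u v) :
    {e : Sym2 α | e ∈ c.edges} = {e : Sym2 α | e ∈ c'.edges} := by
  have hS := partialFunGraph.isForwardClosed_support_of_isCycle hc
  have hS' := partialFunGraph.isForwardClosed_support_of_isCycle hc'
  obtain ⟨z, hz', huz⟩ :=
    partialFunGraph.exists_reflTransGen_mem_of_reachable hS' c'.start_mem_support huv.symm
  have hz : z ∈ c.support := hS.mem_of_reflTransGen c.start_mem_support huz
  have hsupp : ∀ x, x ∈ c.support ↔ x ∈ c'.support := fun x =>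
    ⟨partialFunGraph.forall_mem_support_mem_of_isCycle hc hS' hz hz' x,
      partialFunGraph.forall_mem_support_mem_of_isCycle hc' hS hz' hz x⟩
  ext e
  simp only [Set.mem_ofPred_eq, partialFunGraph.mem_edges_iff_of_isCycle hc,
    partialFunGraph.mem_edges_iff_of_isCycle hc', hsupp]

/-- Let `α` be a finite type and `f : α → Option α` a partial function.
In the simple graph on `α` in which distinct `a` and `b` are adjacent iff `f a = some b`
or `f b = some a`, any two cycles whose base vertices lie in the same connected
component have the same edge set; that is, each connected component contains at most
one cycle. -/
theorem partialFunGraph_unique_cycle {α : Type*} [Fintype α] (f : α → Option α)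
    {u v : α} (c : (partialFunGraph f).Walk u u) (c' : (partialFunGraph f).Walk v v)
    (hc : c.IsCycle) (hc' : c'.IsCycle)
    (huv : (partialFunGraph f).Reachable u v) :
    {e : Sym2 α | e ∈ c.edges} = {e : Sym2 α | e ∈ c'.edges} :=
  partialFunGraph_unique_cycle_general f c c' hc hc' huv
end
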